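/- Under the Kähler cvc(1) package described in the context, let σ1, σ2 ⊆ V be orthogonal 2-dimensional subspaces, each invariant under both A and J, and let μ_i > 0 satisfy ‖Ax‖ = μ_i·‖x‖ for all x ∈ σ_i (i = 1,2). Let v_i ∈ σ_i be unit vectors and set v̄_i = Av_i/μ_i. If Jv1 = v̄1 then Jv2 = v̄2; if Jv1 = -v̄1 then Jv2 = -v̄2; and in both cases R(v2, v1, v̄1, v̄2) = 1. -/

import Mathlib

open scoped RealInnerProductSpace

/-!
Test the Jacobi condition along `p = v₁ + v₂` against `w = μ₂ vbar₁ - μ₁ vbar₂ ⟂ p, A p` and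
polarize it through the Bianchi identity: this gives
`3 μ₁ R(v₂, v₁, vbar₁, vbar₂) = μ₂ (R(vbar₁, v₁, v₁, vbar₁) - 1) ≥ 0`.
On the other hand `J v₂ = δ vbar₂` with `δ = ±1`, since `J` is skew and preserves `σ₂`, so if
`J v₁ = ε vbar₁` the Kähler identity gives
`R(v₂, v₁, vbar₁, vbar₂) = R(J v₂, J v₁, vbar₁, vbar₂) = δ ε R(vbar₂, vbar₁, vbar₁, vbar₂) = δ ε`.
Nonnegativity forces `δ = ε`.
-/

structure IsCurvatureTensor {V : Type*} [AddCommGroup V] [Module ℝ V]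
    (R : V →ₗ[ℝ] V →ₗ[ℝ] V →ₗ[ℝ] V →ₗ[ℝ] ℝ) : Prop where
  antisymm_left : ∀ X Y Z W, R X Y Z W = -R Y X Z W
  pair_symm : ∀ X Y Z W, R X Y Z W = R Z W X Y
  bianchi : ∀ X Y Z W, R X Y Z W + R Y Z X W + R Z X Y W = 0

namespace IsCurvatureTensor

variable {V : Type*} [AddCommGroup V] [Module ℝ V] {R : V →ₗ[ℝ] V →ₗ[ℝ] V →ₗ[ℝ] V →ₗ[ℝ] ℝ}

theorem antisymm_right (hR : IsCurvatureTensor R) (X Y Z W : V) : R X Y Z W = -R X Y W Z := by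
  rw [hR.pair_symm, hR.antisymm_left, hR.pair_symm W]

theorem apply_self_right (hR : IsCurvatureTensor R) (X Y Z : V) : R X Y Z Z = 0 := by
  linarith [hR.antisymm_right X Y Z Z]

theorem reverse (hR : IsCurvatureTensor R) (X Y Z W : V) : R X Y Z W = R W Z Y X := by
  rw [hR.pair_symm, hR.antisymm_left, hR.antisymm_right, neg_neg]

end IsCurvatureTensor

section

variable {V : Type*} [NormedAddCommGroup V] [InnerProductSpace ℝ V]
  {R : V →ₗ[ℝ] V →ₗ[ℝ] V →ₗ[ℝ] V →ₗ[ℝ] ℝ} {A : V →ₗ[ℝ] V}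

theorem inner_map_self_eq_zero_of_skew {T : V →ₗ[ℝ] V} (hT : ∀ x y, ⟪T x, y⟫ = -⟪x, T y⟫)
    (x : V) : ⟪T x, x⟫ = 0 := by
  linarith [hT x x, real_inner_comm x (T x)]

theorem inv_smul_apply_mem_and_norm_eq_one_and_inner_eq_zero
    (hA : ∀ x y, ⟪A x, y⟫ = -⟪x, A y⟫) {σ : Submodule ℝ V} (hAσ : ∀ x ∈ σ, A x ∈ σ) {μ : ℝ}
    (hμ : 0 < μ) {v vbar : V} (hv : v ∈ σ) (hAv : ‖A v‖ = μ)
    (hvbar : vbar = μ⁻¹ • A v) : vbar ∈ σ ∧ ‖vbar‖ = 1 ∧ ⟪v, vbar⟫ = 0 := by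
  subst hvbar
  refine ⟨σ.smul_mem _ (hAσ v hv), ?_, ?_⟩
  · rw [norm_smul, hAv, norm_inv, Real.norm_of_nonneg hμ.le, inv_mul_cancel₀ hμ.ne']
  · rw [inner_smul_right, real_inner_comm, inner_map_self_eq_zero_of_skew hA, mul_zero]

/-- The condition `E_v ⊇ span {v, A v}ᗮ` on unit vectors `v`, made homogeneous in `v`. -/
def JacobiScalarOnComplement (R : V →ₗ[ℝ] V →ₗ[ℝ] V →ₗ[ℝ] V →ₗ[ℝ] ℝ) (A : V →ₗ[ℝ] V) : Prop :=
  ∀ v w : V, ⟪w, v⟫ = 0 → ⟪w, A v⟫ = 0 → ∀ u, R w v v u = ‖v‖ ^ 2 * ⟪w, u⟫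

theorem jacobiScalarOnComplement_of_forall_iff
    (hE : ∀ v : V, ‖v‖ = 1 → ∀ w : V,
      (⟪w, v⟫ = 0 ∧ ∀ u : V, R w v v u = ⟪w, u⟫) ↔ w ∈ (Submodule.span ℝ {v, A v})ᗮ) :
    JacobiScalarOnComplement R A := by
  have hunit (v : V) (hv : ‖v‖ = 1) (w : V) (hwv : ⟪w, v⟫ = 0) (hwAv : ⟪w, A v⟫ = 0) (u : V) :
      R w v v u = ⟪w, u⟫ := by
    refine ((hE v hv w).2 ?_).2 u
    rw [Submodule.span_insert, ← Submodule.inf_orthogonal]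
    exact ⟨Submodule.mem_orthogonal_singleton_iff_inner_left.2 hwv,
      Submodule.mem_orthogonal_singleton_iff_inner_left.2 hwAv⟩
  intro v w hwv hwAv u
  rcases eq_or_ne v 0 with rfl | hv
  · simp
  have hv' : ‖v‖ ≠ 0 := norm_ne_zero_iff.2 hv
  have h := hunit (‖v‖⁻¹ • v) (by rw [norm_smul, norm_inv, norm_norm, inv_mul_cancel₀ hv'])
    w (by rw [inner_smul_right, hwv, mul_zero])
    (by rw [map_smul, inner_smul_right, hwAv, mul_zero]) u
  simp only [map_smul, LinearMap.smul_apply, smul_eq_mul] at h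
  field_simp at h
  linarith

namespace JacobiScalarOnComplement

theorem apply_eq_two_mul (hJac : JacobiScalarOnComplement R A) (hR : IsCurvatureTensor R)
    {x y w : V} (hxy : ⟪x, y⟫ = 0) (hwx : ⟪w, x⟫ = 0) (hwAx : ⟪w, A x⟫ = 0) (hwy : ⟪w, y⟫ = 0)
    (hwAy : ⟪w, A y⟫ = 0) (u : V) : R y x w u = 2 * R w x y u := by
  have hpolar : R w x y u + R w y x u = 0 := by
    have hsum := hJac (x + y) w (by rw [inner_add_right, hwx, hwy, add_zero])
      (by rw [map_add, inner_add_right, hwAx, hwAy, add_zero]) u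
    simp only [map_add, LinearMap.add_apply] at hsum
    rw [hJac x w hwx hwAx, hJac y w hwy hwAy, norm_add_sq_real, hxy] at hsum
    linarith
  linarith [hR.bianchi w x y u, hR.antisymm_left y w x u, hR.antisymm_left y x w u]

theorem three_mul_apply_eq (hJac : JacobiScalarOnComplement R A) (hR : IsCurvatureTensor R)
    {σ₁ σ₂ : Submodule ℝ V} (hσ : σ₁ ⟂ σ₂) (hA₁ : ∀ x ∈ σ₁, A x ∈ σ₁) {μ₁ μ₂ : ℝ}
    {v₁ vbar₁ v₂ vbar₂ : V} (hv₁ : v₁ ∈ σ₁) (hvbar₁ : vbar₁ ∈ σ₁) (hv₂ : v₂ ∈ σ₂)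
    (hvbar₂ : vbar₂ ∈ σ₂) (hv₁u : ‖v₁‖ = 1) (hvbar₁u : ‖vbar₁‖ = 1) (hv₂u : ‖v₂‖ = 1)
    (hvbar₂u : ‖vbar₂‖ = 1) (h₁ : ⟪v₁, vbar₁⟫ = 0) (h₂ : ⟪v₂, vbar₂⟫ = 0)
    (hAv₁ : A v₁ = μ₁ • vbar₁) (hAv₂ : A v₂ = μ₂ • vbar₂) :
    3 * μ₁ * R v₂ v₁ vbar₁ vbar₂ = μ₂ * (R vbar₁ v₁ v₁ vbar₁ - 1) := by
  have ortho {x y : V} (hx : x ∈ σ₁) (hy : y ∈ σ₂) : ⟪x, y⟫ = 0 := hσ.inner_eq hx hy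
  have ortho' {x y : V} (hy : y ∈ σ₂) (hx : x ∈ σ₁) : ⟪y, x⟫ = 0 := hσ.symm.inner_eq hy hx
  have exch {w : V} (hw : w ∈ σ₂) (u : V) : R vbar₁ v₁ w u = 2 * R w v₁ vbar₁ u :=
    hJac.apply_eq_two_mul hR h₁ (ortho' hw hv₁) (ortho' hw (hA₁ _ hv₁)) (ortho' hw hvbar₁)
      (ortho' hw (hA₁ _ hvbar₁)) u
  have h₁' : ⟪vbar₁, v₁⟫ = 0 := by rw [real_inner_comm, h₁]
  have h₂' : ⟪vbar₂, v₂⟫ = 0 := by rw [real_inner_comm, h₂]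
  have hbar₁₁ : ⟪vbar₁, vbar₁⟫ = 1 := by rw [real_inner_self_eq_norm_sq, hvbar₁u, one_pow]
  have hbar₂₂ : ⟪vbar₂, vbar₂⟫ = 1 := by rw [real_inner_self_eq_norm_sq, hvbar₂u, one_pow]
  have jac₂ : ∀ u, R vbar₁ v₂ v₂ u = ⟪vbar₁, u⟫ := fun u => by
    rw [hJac v₂ vbar₁ (ortho hvbar₁ hv₂)
      (by rw [hAv₂, inner_smul_right, ortho hvbar₁ hvbar₂, mul_zero]), hv₂u, one_pow, one_mul]
  have hdiag := hJac (v₁ + v₂) (μ₂ • vbar₁ - μ₁ • vbar₂)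
    (by simp only [inner_sub_left, inner_add_right, real_inner_smul_left, h₁', h₂',
      ortho hvbar₁ hv₂, ortho' hvbar₂ hv₁]; ring)
    (by simp only [map_add, hAv₁, hAv₂, inner_sub_left, inner_add_right, real_inner_smul_left,
      inner_smul_right, hbar₁₁, hbar₂₂, ortho hvbar₁ hvbar₂, ortho' hvbar₂ hvbar₁]; ring) vbar₁
  rw [norm_add_sq_real, hv₁u, hv₂u, ortho hv₁ hv₂, inner_sub_left, real_inner_smul_left,
    real_inner_smul_left, hbar₁₁, ortho' hvbar₂ hvbar₁, sub_eq_add_neg, ← neg_smul] at hdiag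
  simp only [map_add, map_smul, LinearMap.add_apply, LinearMap.smul_apply, smul_eq_mul] at hdiag
  have e₁ : R vbar₁ v₁ v₂ vbar₁ = 0 := by rw [exch hv₂, hR.apply_self_right, mul_zero]
  have e₂ : R vbar₁ v₂ v₁ vbar₁ = 0 := by rw [hR.reverse, e₁]
  have e₃ : R vbar₂ v₁ v₁ vbar₁ = 0 := by
    rw [hJac v₁ vbar₂ (ortho' hvbar₂ hv₁) (ortho' hvbar₂ (hA₁ _ hv₁)), ortho' hvbar₂ hvbar₁,
      mul_zero]
  have e₄ : R vbar₂ v₁ v₂ vbar₁ = R v₂ v₁ vbar₁ vbar₂ := by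
    linarith [hR.antisymm_right vbar₂ v₁ v₂ vbar₁, exch hvbar₂ v₂,
      hR.antisymm_right vbar₁ v₁ vbar₂ v₂, exch hv₂ vbar₂]
  have e₅ : R vbar₂ v₂ v₁ vbar₁ = 2 * R v₂ v₁ vbar₁ vbar₂ := by rw [hR.reverse, exch hv₂]
  have e₆ : R vbar₂ v₂ v₂ vbar₁ = 0 := by rw [hR.reverse, jac₂, ortho hvbar₁ hvbar₂]
  rw [e₁, e₂, e₃, e₄, e₅, e₆, jac₂, hbar₁₁] at hdiag
  linarith

theorem apply_nonneg (hJac : JacobiScalarOnComplement R A) (hR : IsCurvatureTensor R)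
    {σ₁ σ₂ : Submodule ℝ V} (hσ : σ₁ ⟂ σ₂) (hA₁ : ∀ x ∈ σ₁, A x ∈ σ₁) {μ₁ μ₂ : ℝ}
    (hμ₁ : 0 < μ₁) (hμ₂ : 0 < μ₂) {v₁ vbar₁ v₂ vbar₂ : V} (hv₁ : v₁ ∈ σ₁) (hvbar₁ : vbar₁ ∈ σ₁)
    (hv₂ : v₂ ∈ σ₂) (hvbar₂ : vbar₂ ∈ σ₂) (hv₁u : ‖v₁‖ = 1) (hvbar₁u : ‖vbar₁‖ = 1)
    (hv₂u : ‖v₂‖ = 1) (hvbar₂u : ‖vbar₂‖ = 1) (h₁ : ⟪v₁, vbar₁⟫ = 0) (h₂ : ⟪v₂, vbar₂⟫ = 0)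
    (hAv₁ : A v₁ = μ₁ • vbar₁) (hAv₂ : A v₂ = μ₂ • vbar₂) (hK : 1 ≤ R vbar₁ v₁ v₁ vbar₁) :
    0 ≤ R v₂ v₁ vbar₁ vbar₂ := by
  have h := hJac.three_mul_apply_eq hR hσ hA₁ hv₁ hvbar₁ hv₂ hvbar₂ hv₁u hvbar₁u hv₂u hvbar₂u h₁ h₂
    hAv₁ hAv₂
  have hpos : 0 ≤ μ₂ * (R vbar₁ v₁ v₁ vbar₁ - 1) := mul_nonneg hμ₂.le (by linarith)
  nlinarith

end JacobiScalarOnComplement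

end

theorem apply_eq_mul_of_kahler {V : Type*} [AddCommGroup V] [Module ℝ V] {J : V →ₗ[ℝ] V}
    {R : V →ₗ[ℝ] V →ₗ[ℝ] V →ₗ[ℝ] V →ₗ[ℝ] ℝ} (hkahler : ∀ X Y Z W, R (J X) (J Y) Z W = R X Y Z W)
    {v₁ w₁ v₂ w₂ : V} {ε δ : ℝ} (h₁ : J v₁ = ε • w₁) (h₂ : J v₂ = δ • w₂) (Z W : V) :
    R v₂ v₁ Z W = δ * ε * R w₂ w₁ Z W := by
  rw [← hkahler, h₁, h₂]
  simp only [map_smul, LinearMap.smul_apply, smul_eq_mul]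
  ring

theorem eq_inner_smul_of_mem_of_finrank_eq_two {V : Type*} [NormedAddCommGroup V]
    [InnerProductSpace ℝ V] {σ : Submodule ℝ V} (hσ : Module.finrank ℝ σ = 2) {v w x : V}
    (hv : v ∈ σ) (hw : w ∈ σ) (hvu : ‖v‖ = 1) (hwu : ‖w‖ = 1) (hvw : ⟪v, w⟫ = 0) (hx : x ∈ σ)
    (hxv : ⟪v, x⟫ = 0) : x = ⟪w, x⟫ • w := by
  have hvv : ⟪v, v⟫ = 1 := by rw [real_inner_self_eq_norm_sq, hvu, one_pow]
  have hww : ⟪w, w⟫ = 1 := by rw [real_inner_self_eq_norm_sq, hwu, one_pow]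
  have hwv : ⟪w, v⟫ = 0 := by rw [real_inner_comm, hvw]
  have hli : LinearIndependent ℝ ![v, w] := by
    refine LinearIndependent.pair_iff.2 fun s t hst => ⟨?_, ?_⟩
    · simpa only [inner_add_right, inner_smul_right, hvv, hvw, inner_zero_right, mul_one,
        mul_zero, add_zero] using congr_arg (⟪v, ·⟫) hst
    · simpa only [inner_add_right, inner_smul_right, hww, hwv, inner_zero_right, mul_one,
        mul_zero, zero_add] using congr_arg (⟪w, ·⟫) hst
  have : FiniteDimensional ℝ σ := Module.finite_of_finrank_pos (by omega)
  have hspan : Submodule.span ℝ {v, w} = σ := by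
    refine Submodule.eq_of_le_of_finrank_eq ?_ ?_
    · simpa [Submodule.span_le, Set.insert_subset_iff] using ⟨hv, hw⟩
    · rw [hσ, ← Matrix.range_cons_cons_empty v w ![], finrank_span_eq_card hli,
        Fintype.card_fin]
  obtain ⟨a, b, rfl⟩ := Submodule.mem_span_pair.1 (hspan ▸ hx)
  simp only [inner_add_right, inner_smul_right, hvv, hvw, hww, hwv] at hxv ⊢
  simp [show a = 0 by linarith]

theorem exists_apply_eq_smul_of_finrank_eq_two {V : Type*} [NormedAddCommGroup V]
    [InnerProductSpace ℝ V] {J : V →ₗ[ℝ] V} (hJiso : ∀ x y : V, ⟪J x, J y⟫ = ⟪x, y⟫)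
    (hJ2 : ∀ x : V, J (J x) = -x) {σ : Submodule ℝ V} (hσ : Module.finrank ℝ σ = 2)
    (hJσ : ∀ x ∈ σ, J x ∈ σ) {v w : V} (hv : v ∈ σ) (hw : w ∈ σ) (hvu : ‖v‖ = 1)
    (hwu : ‖w‖ = 1) (hvw : ⟪v, w⟫ = 0) : ∃ δ : ℝ, δ * δ = 1 ∧ J v = δ • w := by
  have hJskew (x y : V) : ⟪J x, y⟫ = -⟪x, J y⟫ := by rw [← hJiso (J x), hJ2, inner_neg_left]
  have hJv := eq_inner_smul_of_mem_of_finrank_eq_two hσ hv hw hvu hwu hvw (hJσ v hv)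
    (by rw [real_inner_comm, inner_map_self_eq_zero_of_skew hJskew])
  refine ⟨_, ?_, hJv⟩
  have h := hJiso v v
  rw [hJv, real_inner_smul_left, real_inner_smul_right, real_inner_self_eq_norm_sq,
    real_inner_self_eq_norm_sq, hwu, hvu] at h
  linarith

theorem stmt_14_general
    {V : Type*} [NormedAddCommGroup V] [InnerProductSpace ℝ V]
    (J : V →ₗ[ℝ] V)
    (hJiso : ∀ x y : V, ⟪J x, J y⟫ = ⟪x, y⟫)
    (hJ2 : ∀ x : V, J (J x) = -x)
    (R : V →ₗ[ℝ] V →ₗ[ℝ] V →ₗ[ℝ] V →ₗ[ℝ] ℝ)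
    (hskew : ∀ X Y Z W : V, R X Y Z W = - R Y X Z W)
    (hpair : ∀ X Y Z W : V, R X Y Z W = R Z W X Y)
    (hbianchi : ∀ X Y Z W : V, R X Y Z W + R Y Z X W + R Z X Y W = 0)
    (hkahler : ∀ X Y Z W : V, R (J X) (J Y) Z W = R X Y Z W)
    (hsec : ∀ x y : V, ‖x‖ = 1 → ‖y‖ = 1 → ⟪x, y⟫ = 0 → 1 ≤ R y x x y)
    (A : V →ₗ[ℝ] V)
    (hAskew : ∀ x y : V, ⟪A x, y⟫ = -⟪x, A y⟫)
    (hE : ∀ v : V, ‖v‖ = 1 → ∀ w : V,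
      (⟪w, v⟫ = 0 ∧ ∀ u : V, R w v v u = ⟪w, u⟫) ↔
        w ∈ (Submodule.span ℝ {v, A v})ᗮ)
    (σ1 σ2 : Submodule ℝ V)
    (hσ2 : Module.finrank ℝ σ2 = 2)
    (horth : ∀ x ∈ σ1, ∀ y ∈ σ2, ⟪x, y⟫ = 0)
    (hA1 : Submodule.map A σ1 = σ1) (hA2 : Submodule.map A σ2 = σ2)
    (hJ2' : Submodule.map J σ2 = σ2)
    (μ1 μ2 : ℝ) (hμ1 : 0 < μ1) (hμ2 : 0 < μ2)
    (hAμ1 : ∀ x ∈ σ1, ‖A x‖ = μ1 * ‖x‖) (hAμ2 : ∀ x ∈ σ2, ‖A x‖ = μ2 * ‖x‖)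
    (v1 : V) (hv1 : v1 ∈ σ1) (hv1u : ‖v1‖ = 1)
    (v2 : V) (hv2 : v2 ∈ σ2) (hv2u : ‖v2‖ = 1)
    (vbar1 vbar2 : V) (hvbar1 : vbar1 = μ1⁻¹ • A v1) (hvbar2 : vbar2 = μ2⁻¹ • A v2) :
    (J v1 = vbar1 → J v2 = vbar2) ∧
    (J v1 = -vbar1 → J v2 = -vbar2) ∧
    ((J v1 = vbar1 ∨ J v1 = -vbar1) → R v2 v1 vbar1 vbar2 = 1) := by
  have hR : IsCurvatureTensor R := ⟨hskew, hpair, hbianchi⟩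
  have hJac := jacobiScalarOnComplement_of_forall_iff hE
  have hσ : σ1 ⟂ σ2 := Submodule.isOrtho_iff_inner_eq.2 horth
  have hA1' (x : V) (hx : x ∈ σ1) : A x ∈ σ1 := hA1 ▸ Submodule.mem_map_of_mem hx
  have hA2' (x : V) (hx : x ∈ σ2) : A x ∈ σ2 := hA2 ▸ Submodule.mem_map_of_mem hx
  obtain ⟨hvbar1σ, hvbar1u, h11⟩ := inv_smul_apply_mem_and_norm_eq_one_and_inner_eq_zero hAskew
    hA1' hμ1 hv1 (by rw [hAμ1 v1 hv1, hv1u, mul_one]) hvbar1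
  obtain ⟨hvbar2σ, hvbar2u, h22⟩ := inv_smul_apply_mem_and_norm_eq_one_and_inner_eq_zero hAskew
    hA2' hμ2 hv2 (by rw [hAμ2 v2 hv2, hv2u, mul_one]) hvbar2
  have hT : 0 ≤ R v2 v1 vbar1 vbar2 := hJac.apply_nonneg hR hσ hA1' hμ1 hμ2 hv1 hvbar1σ hv2
    hvbar2σ hv1u hvbar1u hv2u hvbar2u h11 h22 (by rw [hvbar1, smul_inv_smul₀ hμ1.ne'])
    (by rw [hvbar2, smul_inv_smul₀ hμ2.ne']) (hsec v1 vbar1 hv1u hvbar1u h11)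
  obtain ⟨δ, hδ, hJv2⟩ := exists_apply_eq_smul_of_finrank_eq_two hJiso hJ2 hσ2
    (fun x hx => hJ2' ▸ Submodule.mem_map_of_mem hx) hv2 hvbar2σ hv2u hvbar2u h22
  have hbar : R vbar2 vbar1 vbar1 vbar2 = 1 := by
    rw [hJac vbar1 vbar2 (hσ.symm.inner_eq hvbar2σ hvbar1σ)
      (hσ.symm.inner_eq hvbar2σ (hA1' _ hvbar1σ)), hvbar1u, real_inner_self_eq_norm_sq, hvbar2u]
    norm_num
  have key (ε : ℝ) (hε : ε * ε = 1) (hJv1 : J v1 = ε • vbar1) :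
      J v2 = ε • vbar2 ∧ R v2 v1 vbar1 vbar2 = 1 := by
    have hTδε : R v2 v1 vbar1 vbar2 = δ * ε := by
      rw [apply_eq_mul_of_kahler hkahler hJv1 hJv2, hbar, mul_one]
    have hδε : δ * ε = 1 := by nlinarith
    have hδ_eq : δ = ε := by linear_combination (-δ) * hε + ε * hδε
    exact ⟨hδ_eq ▸ hJv2, hTδε.trans hδε⟩
  refine ⟨fun h => ?_, fun h => ?_, ?_⟩
  · simpa using (key 1 (one_mul 1) (by rwa [one_smul])).1
  · simpa using (key (-1) (by norm_num) (by rwa [neg_one_smul])).1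
  · rintro (h | h)
    · exact (key 1 (one_mul 1) (by rwa [one_smul])).2
    · exact (key (-1) (by norm_num) (by rwa [neg_one_smul])).2

/-- In the Kähler cvc(1) package, for orthogonal 2-dimensional subspaces
`σ1, σ2` invariant under both `A` and `J`, with `‖Ax‖ = μᵢ‖x‖` on `σᵢ`, unit vectors
`vᵢ ∈ σᵢ`, and `v̄ᵢ = Avᵢ/μᵢ`: if `Jv1 = v̄1` then `Jv2 = v̄2`; if `Jv1 = -v̄1` then
`Jv2 = -v̄2`; and in both cases `R(v2,v1,v̄1,v̄2) = 1`. -/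
theorem stmt_14
    {V : Type*} [NormedAddCommGroup V] [InnerProductSpace ℝ V] [FiniteDimensional ℝ V]
    (J : V →ₗ[ℝ] V)
    (hJiso : ∀ x y : V, ⟪J x, J y⟫ = ⟪x, y⟫)
    (hJ2 : ∀ x : V, J (J x) = -x)
    (R : V →ₗ[ℝ] V →ₗ[ℝ] V →ₗ[ℝ] V →ₗ[ℝ] ℝ)
    (hskew : ∀ X Y Z W : V, R X Y Z W = - R Y X Z W)
    (hpair : ∀ X Y Z W : V, R X Y Z W = R Z W X Y)
    (hbianchi : ∀ X Y Z W : V, R X Y Z W + R Y Z X W + R Z X Y W = 0)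
    (hkahler : ∀ X Y Z W : V, R (J X) (J Y) Z W = R X Y Z W)
    (hsec : ∀ x y : V, ‖x‖ = 1 → ‖y‖ = 1 → ⟪x, y⟫ = 0 → 1 ≤ R y x x y)
    (A : V →ₗ[ℝ] V) (hAinv : Function.Bijective A)
    (hAskew : ∀ x y : V, ⟪A x, y⟫ = -⟪x, A y⟫)
    (hE : ∀ v : V, ‖v‖ = 1 → ∀ w : V,
      (⟪w, v⟫ = 0 ∧ ∀ u : V, R w v v u = ⟪w, u⟫) ↔
        w ∈ (Submodule.span ℝ {v, A v})ᗮ)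
    (σ1 σ2 : Submodule ℝ V)
    (hσ1 : Module.finrank ℝ σ1 = 2) (hσ2 : Module.finrank ℝ σ2 = 2)
    (horth : ∀ x ∈ σ1, ∀ y ∈ σ2, ⟪x, y⟫ = 0)
    (hA1 : Submodule.map A σ1 = σ1) (hA2 : Submodule.map A σ2 = σ2)
    (hJ1 : Submodule.map J σ1 = σ1) (hJ2' : Submodule.map J σ2 = σ2)
    (μ1 μ2 : ℝ) (hμ1 : 0 < μ1) (hμ2 : 0 < μ2)
    (hAμ1 : ∀ x ∈ σ1, ‖A x‖ = μ1 * ‖x‖) (hAμ2 : ∀ x ∈ σ2, ‖A x‖ = μ2 * ‖x‖)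
    (v1 : V) (hv1 : v1 ∈ σ1) (hv1u : ‖v1‖ = 1)
    (v2 : V) (hv2 : v2 ∈ σ2) (hv2u : ‖v2‖ = 1)
    (vbar1 vbar2 : V) (hvbar1 : vbar1 = μ1⁻¹ • A v1) (hvbar2 : vbar2 = μ2⁻¹ • A v2) :
    (J v1 = vbar1 → J v2 = vbar2) ∧
    (J v1 = -vbar1 → J v2 = -vbar2) ∧
    ((J v1 = vbar1 ∨ J v1 = -vbar1) → R v2 v1 vbar1 vbar2 = 1) :=
  stmt_14_general J hJiso hJ2 R hskew hpair hbianchi hkahler hsec A hAskew hE σ1 σ2 hσ2 horth hA1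
    hA2 hJ2' μ1 μ2 hμ1 hμ2 hAμ1 hAμ2 v1 hv1 hv1u v2 hv2 hv2u vbar1 vbar2 hvbar1 hvbar2
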